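/- Let 0 < q < p ≤ 1, n ≥ 1, and α, β ≥ 0. The first central moment of the (p,q)-Bernstein-Stancu operator is S_{n,p,q}((t - x); x) = (α - βx)/([n]_{p,q} + β) for all x ∈ [0,1]. -/

import Mathlib

/-
The basis polynomials are `pqWeight p q n k x / p ^ (n(n-1)/2)`, where the weights satisfy a
(p,q)-Pascal recursion: splitting the last factor `p^(n-k) - q^(n-k) x` of the product shows that
`∑ₖ pqWeight (n+1) k x = p^n ∑ₖ pqWeight n k x`, hence the basis is a partition of unity.
The absorption identity `[k+1] C(n+1,k+1) = [n+1] C(n,k)` likewise shifts the sum of the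
nodes `p^(n-k) [k]` against the basis down to `[n] x`. The first central moment is then
`([n] x + α) / ([n] + β) - x = (α - β x) / ([n] + β)`.
-/

open Finset Filter

noncomputable def pqInt (p q : ℝ) (n : ℕ) : ℝ := ∑ i ∈ Finset.range n, p ^ (n - 1 - i) * q ^ i

noncomputable def pqFact (p q : ℝ) (n : ℕ) : ℝ := ∏ j ∈ Finset.range n, pqInt p q (j + 1)

noncomputable def pqChoose (p q : ℝ) (n k : ℕ) : ℝ :=
  pqFact p q n / (pqFact p q k * pqFact p q (n - k))

noncomputable def pqBasis (p q : ℝ) (n k : ℕ) (x : ℝ) : ℝ :=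
  (1 / p ^ (n * (n - 1) / 2)) * pqChoose p q n k * p ^ (k * (k - 1) / 2) * x ^ k *
    ∏ s ∈ Finset.range (n - k), (p ^ s - q ^ s * x)

noncomputable def S (p q α β : ℝ) (n : ℕ) (f : ℝ → ℝ) (x : ℝ) : ℝ :=
  ∑ k ∈ Finset.range (n + 1),
    pqBasis p q n k x * f ((p ^ (n - k) * pqInt p q k + α) / (pqInt p q n + β))

theorem Finset.sum_range_succ_succ_eq_of_split {M : Type*} [AddCommMonoid M] {f a b : ℕ → M}
    {n : ℕ} (h0 : f 0 = a 0) (hmid : ∀ k < n, f (k + 1) = a (k + 1) + b k)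
    (hlast : f (n + 1) = b n) :
    ∑ k ∈ range (n + 2), f k = ∑ k ∈ range (n + 1), (a k + b k) := by
  have hmid' : ∑ k ∈ range n, f (k + 1) = ∑ k ∈ range n, (a (k + 1) + b k) :=
    sum_congr rfl fun k hk => hmid k (mem_range.mp hk)
  rw [sum_range_succ, sum_range_succ', hmid', sum_add_distrib, sum_add_distrib,
    sum_range_succ' a, sum_range_succ b, h0, hlast]
  abel

section PQ

variable {p q : ℝ}

lemma pqInt_zero (p q : ℝ) : pqInt p q 0 = 0 := rfl

lemma pqInt_pos (hp : 0 < p) (hq : 0 < q) {n : ℕ} (hn : 1 ≤ n) : 0 < pqInt p q n :=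
  sum_pos (fun _ _ => mul_pos (pow_pos hp _) (pow_pos hq _)) (nonempty_range_iff.mpr (by omega))

lemma pqInt_add (p q : ℝ) (a b : ℕ) :
    pqInt p q (a + b) = p ^ b * pqInt p q a + q ^ a * pqInt p q b := by
  unfold pqInt
  rw [sum_range_add, mul_sum, mul_sum]
  congr 1
  · refine sum_congr rfl fun i hi => ?_
    rw [← mul_assoc, ← pow_add, show b + (a - 1 - i) = a + b - 1 - i by
      have := mem_range.mp hi; omega]
  · refine sum_congr rfl fun i hi => ?_
    rw [show a + b - 1 - (a + i) = b - 1 - i by omega, pow_add]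
    ring

lemma pqFact_zero (p q : ℝ) : pqFact p q 0 = 1 := rfl

lemma pqFact_succ (p q : ℝ) (n : ℕ) : pqFact p q (n + 1) = pqFact p q n * pqInt p q (n + 1) :=
  prod_range_succ _ _

lemma pqFact_pos (hp : 0 < p) (hq : 0 < q) (n : ℕ) : 0 < pqFact p q n :=
  prod_pos fun _ _ => pqInt_pos hp hq (by omega)

lemma pqChoose_zero_right (hp : 0 < p) (hq : 0 < q) (n : ℕ) : pqChoose p q n 0 = 1 := by
  rw [pqChoose, pqFact_zero, Nat.sub_zero, one_mul, div_self (pqFact_pos hp hq n).ne']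

lemma pqChoose_self (hp : 0 < p) (hq : 0 < q) (n : ℕ) : pqChoose p q n n = 1 := by
  rw [pqChoose, Nat.sub_self, pqFact_zero, mul_one, div_self (pqFact_pos hp hq n).ne']

lemma pqChoose_succ_succ (hp : 0 < p) (hq : 0 < q) {n k : ℕ} (hk : k < n) :
    pqChoose p q (n + 1) (k + 1) =
      p ^ (k + 1) * pqChoose p q n (k + 1) + q ^ (n - k) * pqChoose p q n k := by
  obtain ⟨m, rfl⟩ : ∃ m, n = k + 1 + m := ⟨n - (k + 1), by omega⟩
  have hint : pqInt p q (k + 1 + m + 1) =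
      p ^ (k + 1) * pqInt p q (m + 1) + q ^ (m + 1) * pqInt p q (k + 1) := by
    rw [show k + 1 + m + 1 = m + 1 + (k + 1) by ring, pqInt_add]
  simp only [pqChoose, show k + 1 + m + 1 - (k + 1) = m + 1 by omega,
    show k + 1 + m - (k + 1) = m by omega, show k + 1 + m - k = m + 1 by omega]
  rw [pqFact_succ p q (k + 1 + m), pqFact_succ p q k, pqFact_succ p q m, hint]
  have := (pqFact_pos hp hq (k + 1 + m)).ne'
  have := (pqFact_pos hp hq k).ne'
  have := (pqFact_pos hp hq m).ne'
  have := (pqInt_pos hp hq (n := k + 1) (by omega)).ne'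
  have := (pqInt_pos hp hq (n := m + 1) (by omega)).ne'
  field_simp

lemma pqInt_mul_pqChoose_succ_succ (hp : 0 < p) (hq : 0 < q) {n k : ℕ} (hk : k ≤ n) :
    pqInt p q (k + 1) * pqChoose p q (n + 1) (k + 1) = pqInt p q (n + 1) * pqChoose p q n k := by
  rw [pqChoose, pqChoose, show n + 1 - (k + 1) = n - k by omega, pqFact_succ p q n,
    pqFact_succ p q k]
  have := (pqFact_pos hp hq n).ne'
  have := (pqFact_pos hp hq k).ne'
  have := (pqFact_pos hp hq (n - k)).ne'
  have := (pqInt_pos hp hq (n := k + 1) (by omega)).ne'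
  field_simp

end PQ
noncomputable def pqWeight (p q : ℝ) (n k : ℕ) (x : ℝ) : ℝ :=
  pqChoose p q n k * p ^ (k * (k - 1) / 2) * x ^ k * ∏ s ∈ range (n - k), (p ^ s - q ^ s * x)

section Weight

variable {p q : ℝ} (x : ℝ)

lemma pqBasis_eq_pqWeight_div (p q : ℝ) (n k : ℕ) :
    pqBasis p q n k x = pqWeight p q n k x / p ^ (n * (n - 1) / 2) := by
  rw [pqBasis, pqWeight]
  ring

lemma pqWeight_succ_zero (hp : 0 < p) (hq : 0 < q) (n : ℕ) :
    pqWeight p q (n + 1) 0 x = pqWeight p q n 0 x * (p ^ n - q ^ n * x) := by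
  simp only [pqWeight, pqChoose_zero_right hp hq, Nat.sub_zero, prod_range_succ]
  ring

lemma pqWeight_succ_self (hp : 0 < p) (hq : 0 < q) (n : ℕ) :
    pqWeight p q (n + 1) (n + 1) x = p ^ n * x * pqWeight p q n n x := by
  simp only [pqWeight, pqChoose_self hp hq, Nat.sub_self, Nat.triangle_succ, pow_add]
  ring

lemma pqWeight_succ_succ (hp : 0 < p) (hq : 0 < q) {n k : ℕ} (hk : k < n) :
    pqWeight p q (n + 1) (k + 1) x =
      p ^ (k + 1) * pqWeight p q n (k + 1) x * (p ^ (n - (k + 1)) - q ^ (n - (k + 1)) * x) +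
        p ^ k * q ^ (n - k) * x * pqWeight p q n k x := by
  have hsplit : n - k = n - (k + 1) + 1 := by omega
  simp only [pqWeight, pqChoose_succ_succ hp hq hk, Nat.triangle_succ,
    show n + 1 - (k + 1) = n - k by omega, hsplit, prod_range_succ, pow_add]
  ring

lemma pqWeight_succ_succ_mul_node (hp : 0 < p) (hq : 0 < q) {n k : ℕ} (hk : k ≤ n) :
    pqWeight p q (n + 1) (k + 1) x * (p ^ (n + 1 - (k + 1)) * pqInt p q (k + 1)) =
      pqInt p q (n + 1) * x * p ^ n * pqWeight p q n k x := by
  have hpow : p ^ n = p ^ k * p ^ (n - k) := by rw [← pow_add, Nat.add_sub_cancel' hk]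
  calc pqWeight p q (n + 1) (k + 1) x * (p ^ (n + 1 - (k + 1)) * pqInt p q (k + 1))
      = pqInt p q (k + 1) * pqChoose p q (n + 1) (k + 1) * (p ^ k * p ^ (n - k)) * x *
          (p ^ (k * (k - 1) / 2) * x ^ k * ∏ s ∈ range (n - k), (p ^ s - q ^ s * x)) := by
        simp only [pqWeight, Nat.triangle_succ, show n + 1 - (k + 1) = n - k by omega, pow_add]
        ring
    _ = pqInt p q (n + 1) * x * p ^ n * pqWeight p q n k x := by
        rw [pqInt_mul_pqChoose_succ_succ hp hq hk, ← hpow, pqWeight]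
        ring

theorem sum_pqWeight (hp : 0 < p) (hq : 0 < q) (n : ℕ) :
    ∑ k ∈ range (n + 1), pqWeight p q n k x = p ^ (n * (n - 1) / 2) := by
  induction n with
  | zero => simp [pqWeight, pqChoose_self hp hq]
  | succ n ih =>
    have hsplit : ∀ k ∈ range (n + 1),
        p ^ k * pqWeight p q n k x * (p ^ (n - k) - q ^ (n - k) * x) +
          p ^ k * q ^ (n - k) * x * pqWeight p q n k x = p ^ n * pqWeight p q n k x := by
      intro k hk
      rw [← Nat.add_sub_cancel' (Nat.lt_succ_iff.mp (mem_range.mp hk)), pow_add,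
        Nat.add_sub_cancel_left]
      ring
    rw [sum_range_succ_succ_eq_of_split
        (a := fun k => p ^ k * pqWeight p q n k x * (p ^ (n - k) - q ^ (n - k) * x))
        (b := fun k => p ^ k * q ^ (n - k) * x * pqWeight p q n k x)
        (by simpa using pqWeight_succ_zero x hp hq n) (fun k hk => pqWeight_succ_succ x hp hq hk)
        (by simpa using pqWeight_succ_self x hp hq n),
      sum_congr rfl hsplit, ← mul_sum, ih, Nat.triangle_succ, pow_add, mul_comm]

theorem sum_pqWeight_mul_node (hp : 0 < p) (hq : 0 < q) (n : ℕ) :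
    ∑ k ∈ range (n + 1), pqWeight p q n k x * (p ^ (n - k) * pqInt p q k) =
      pqInt p q n * x * p ^ (n * (n - 1) / 2) := by
  cases n with
  | zero => simp [pqInt_zero]
  | succ n =>
    rw [sum_range_succ', pqInt_zero, mul_zero, mul_zero, add_zero,
      sum_congr rfl fun k hk => pqWeight_succ_succ_mul_node x hp hq (Nat.lt_succ_iff.mp
        (mem_range.mp hk)), ← mul_sum, sum_pqWeight x hp hq, Nat.triangle_succ, pow_add]
    ring

end Weight

theorem sum_pqBasis {p q : ℝ} (hp : 0 < p) (hq : 0 < q) (n : ℕ) (x : ℝ) :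
    ∑ k ∈ range (n + 1), pqBasis p q n k x = 1 := by
  simp only [pqBasis_eq_pqWeight_div, ← sum_div, sum_pqWeight x hp hq]
  exact div_self (pow_pos hp _).ne'

theorem sum_pqBasis_mul_node {p q : ℝ} (hp : 0 < p) (hq : 0 < q) (n : ℕ) (x : ℝ) :
    ∑ k ∈ range (n + 1), pqBasis p q n k x * (p ^ (n - k) * pqInt p q k) = pqInt p q n * x := by
  simp only [pqBasis_eq_pqWeight_div, div_mul_eq_mul_div, ← sum_div, sum_pqWeight_mul_node x hp hq]
  exact mul_div_cancel_right₀ _ (pow_pos hp _).ne'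

theorem S_first_central_moment_general (p q α β : ℝ) (hq : 0 < q) (hqp : q < p)
    (hβ : 0 ≤ β) (n : ℕ) (hn : 1 ≤ n)
    (x : ℝ) :
    S p q α β n (fun t => t - x) x = (α - β * x) / (pqInt p q n + β) := by
  have hp : 0 < p := hq.trans hqp
  have hD : pqInt p q n + β ≠ 0 := (add_pos_of_pos_of_nonneg (pqInt_pos hp hq hn) hβ).ne'
  calc S p q α β n (fun t => t - x) x
      = (∑ k ∈ range (n + 1), pqBasis p q n k x * (p ^ (n - k) * pqInt p q k)) /
            (pqInt p q n + β) +
          (α / (pqInt p q n + β) - x) * ∑ k ∈ range (n + 1), pqBasis p q n k x := by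
        rw [S, sum_div, mul_sum, ← sum_add_distrib]
        refine sum_congr rfl fun k _ => ?_
        field_simp
        ring
    _ = (α - β * x) / (pqInt p q n + β) := by
        rw [sum_pqBasis_mul_node hp hq, sum_pqBasis hp hq]
        field_simp
        ring

theorem S_first_central_moment (p q α β : ℝ) (hq : 0 < q) (hqp : q < p) (hp : p ≤ 1)
    (hα : 0 ≤ α) (hβ : 0 ≤ β) (n : ℕ) (hn : 1 ≤ n)
    (x : ℝ) (hx : x ∈ Set.Icc (0 : ℝ) 1) :
    S p q α β n (fun t => t - x) x = (α - β * x) / (pqInt p q n + β) :=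
  S_first_central_moment_general p q α β hq hqp hβ n hn x
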